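/- Fix α ∈ (0,1), integers k ≥ 1, T ≥ 1, an interval I = [r,s] ⊆ [1,T] of length |I| = s−r+1, reals η > 0 and 0 < σ ≤ 1/2, step sizes 0 < γ₁ < γ₂ < ⋯ < γ_k with γ_{i+1}/γ_i ≤ 2 for all 1 ≤ i < k and γ_k ≥ √(1 + 1/|I|), and a sequence β₁,…,β_T ∈ [0,1]. For each expert i define α₁^i ∈ [0,1] and α_{t+1}^i := α_t^i + γ_i·(α − 1{β_t < α_t^i}); set ℓ_t^i := ℓ(β_t, α_t^i), and define weights w₁^i = 1, w_{t+1}^i = (1−σ)·w_t^i·exp(−η ℓ_t^i) + (σ/k)·Σ_j w_t^j·exp(−η ℓ_t^j), and probabilities p_t^i := w_t^i / Σ_j w_t^j. Then, writing γ_max := γ_k, for every sequence α*_r,…,α*_s ∈ [0,1]: (1/|I|)·Σ_{t=r}^s Σ_i p_t^i ℓ(β_t, α_t^i) − (1/|I|)·Σ_{t=r}^s ℓ(β_t, α*_t) ≤ (log(k/σ) + 2σ|I|)/(η|I|) + (η/|I|)·Σ_{t=r}^s Σ_i p_t^i ℓ(β_t, α_t^i)² + 2√3·(1+γ_max)²·max{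 √((Σ_{t=r+1}^s |α*_t − α*_{t−1}| + 1)/|I|), γ₁ }. -/

import Mathlib

/-!
Each expert is online subgradient descent on the pinball loss with step `γ_i`. Its iterates stay
in `[-γ_i, 1 + γ_i]`, and expanding `(α_{t+1} - α*_t)²` telescopes, up to the moves of the
comparator, to a dynamic regret of at most `D² ((V + 1) / γ_i + γ_i |I| / 2)`, where
`D = 1 + γ_max` and `V` is the path length of `α*`. Consecutive step sizes differ by a factor at
most two and `γ_max ≥ 1 ≥ √((V + 1) / |I|)`, so some `γ_i` is either the smallest step size or
within a factor two of `√((V + 1) / |I|)`, which balances the two terms.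

Fixed share keeps every weight above `σ / k · (1 - σ)^|I|` times the total weight at the start of
`I` times the expert's exponential loss factor, while by `e^(-x) ≤ 1 - x + x²` the total weight
shrinks in round `t` at most by the factor `exp (-η E_t + η² Q_t)`, where `E_t` and `Q_t` are the
expected loss and squared loss. Comparing the two and taking logarithms bounds the regret of the
mixture against every expert, in particular against the good one.
-/

open Finset Real

noncomputable def pinball (α β θ : ℝ) : ℝ := α * (β - θ) - min 0 (β - θ)

lemma pinball_nonneg {α : ℝ} (h0 : 0 ≤ α) (h1 : α ≤ 1) (β θ : ℝ) : 0 ≤ pinball α β θ := by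
  unfold pinball
  rcases le_total 0 (β - θ) with h | h
  · rw [min_eq_left h]; nlinarith
  · rw [min_eq_right h]; nlinarith

lemma pinball_sub_pinball_le (α β θ u : ℝ) :
    pinball α β θ - pinball α β u ≤ ((if β < θ then 1 else 0) - α) * (θ - u) := by
  have h0 := min_le_left 0 (β - u)
  have h1 := min_le_right 0 (β - u)
  unfold pinball
  split_ifs with h
  · rw [min_eq_right (by linarith)]; linarith
  · rw [min_eq_left (by linarith)]; linarith

lemma exp_neg_le_one_sub_add_sq {x : ℝ} (hx : 0 ≤ x) : exp (-x) ≤ 1 - x + x ^ 2 := by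
  rw [exp_neg, inv_le_iff_one_le_mul₀' (exp_pos x)]
  calc 1 ≤ (1 + x) * (1 - x + x ^ 2) := by nlinarith [pow_nonneg hx 3]
    _ ≤ exp x * (1 - x + x ^ 2) := by
      gcongr
      · nlinarith
      · linarith [add_one_le_exp x]

lemma neg_log_one_sub_le_two_mul {σ : ℝ} (h0 : 0 ≤ σ) (h : σ ≤ 1 / 2) :
    -log (1 - σ) ≤ 2 * σ := by
  have hlog := one_sub_inv_le_log_of_pos (by linarith : 0 < 1 - σ)
  have hinv : (1 - σ)⁻¹ ≤ 1 + 2 * σ := by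
    rw [inv_le_iff_one_le_mul₀' (by linarith)]; nlinarith
  linarith

lemma sq_sub_sq_le_two_mul_abs {x u v D : ℝ} (hu : |x - u| ≤ D) (hv : |x - v| ≤ D) :
    (x - u) ^ 2 - (x - v) ^ 2 ≤ 2 * D * |u - v| := by
  have hsum := (abs_add_le (x - u) (x - v)).trans (add_le_add hu hv)
  calc (x - u) ^ 2 - (x - v) ^ 2 = (v - u) * ((x - u) + (x - v)) := by ring
    _ ≤ |v - u| * |(x - u) + (x - v)| := by rw [← abs_mul]; exact le_abs_self _
    _ ≤ |u - v| * (2 * D) := by rw [abs_sub_comm]; gcongr; linarith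
    _ = 2 * D * |u - v| := by ring

lemma abs_sub_le_of_mem_Icc {x v D : ℝ} (hx : x ∈ Set.Icc (1 - D) D) (hv : v ∈ Set.Icc 0 1) :
    |x - v| ≤ D := by
  obtain ⟨hx0, hx1⟩ := hx
  obtain ⟨hv0, hv1⟩ := hv
  rw [abs_le]; constructor <;> linarith

lemma cast_card_Icc {r s : ℕ} (h : r ≤ s + 1) : (#(Icc r s) : ℝ) = s - r + 1 := by
  rw [Nat.card_Icc, Nat.cast_sub (by omega)]; push_cast; ring

-- The last square is carried along to make the induction go through.
lemma sum_sq_sub_sq_le {x u : ℕ → ℝ} {D : ℝ} {r s : ℕ} (hrs : r ≤ s)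
    (hD : ∀ t ∈ Icc r s, |x t - u t| ≤ D) (hD' : ∀ t ∈ Icc (r + 1) s, |x t - u (t - 1)| ≤ D) :
    ∑ t ∈ Icc r s, ((x t - u t) ^ 2 - (x (t + 1) - u t) ^ 2)
      ≤ D ^ 2 + 2 * D * ∑ t ∈ Icc (r + 1) s, |u t - u (t - 1)| - (x (s + 1) - u s) ^ 2 := by
  induction s, hrs using Nat.le_induction with
  | base =>
    have h := hD r (by simp)
    simp only [Icc_self, sum_singleton, Icc_eq_empty_of_lt (Nat.lt_succ_self r), sum_empty]
    nlinarith [abs_nonneg (x r - u r), sq_abs (x r - u r)]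
  | succ s hrs ih =>
    have h := sq_sub_sq_le_two_mul_abs (hD (s + 1) (by simp; omega))
      (hD' (s + 1) (by simp; omega))
    have ih := ih (fun t ht => hD t (Icc_subset_Icc_right (by omega) ht))
      (fun t ht => hD' t (Icc_subset_Icc_right (by omega) ht))
    rw [sum_Icc_succ_top (by omega), sum_Icc_succ_top (by omega)]
    simp only [Nat.add_sub_cancel] at h ⊢
    linarith

lemma aci_step_regret_le {α β θ u γ : ℝ} (hα0 : 0 ≤ α) (hα1 : α ≤ 1) (hγ : 0 < γ) :
    pinball α β θ - pinball α β u
      ≤ ((θ - u) ^ 2 - (θ + γ * (α - if β < θ then 1 else 0) - u) ^ 2) / (2 * γ) + γ / 2 := by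
  have hsub := pinball_sub_pinball_le α β θ u
  generalize hg : (if β < θ then (1 : ℝ) else 0) = e at hsub
  have he : e = 0 ∨ e = 1 := by split_ifs at hg <;> simp [← hg]
  have hsq : (e - α) ^ 2 ≤ 1 := by rcases he with rfl | rfl <;> nlinarith
  have hid : (e - α) * (θ - u) = ((θ - u) ^ 2 - (θ + γ * (α - e) - u) ^ 2) / (2 * γ)
      + γ * (e - α) ^ 2 / 2 := by
    field_simp
    ring
  have hγsq : γ * (e - α) ^ 2 / 2 ≤ γ / 2 := by nlinarith
  linarith

lemma aci_mem_Icc {α γ : ℝ} {β a : ℕ → ℝ} {T : ℕ} (hα0 : 0 ≤ α) (hα1 : α ≤ 1) (hγ : 0 ≤ γ)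
    (hβ : ∀ t, 1 ≤ t → t ≤ T → β t ∈ Set.Icc 0 1) (ha1 : a 1 ∈ Set.Icc 0 1)
    (ha : ∀ t, 1 ≤ t → a (t + 1) = a t + γ * (α - if β t < a t then 1 else 0)) :
    ∀ t, 1 ≤ t → t ≤ T + 1 → a t ∈ Set.Icc (-γ) (1 + γ) := by
  intro t ht
  induction t, ht using Nat.le_induction with
  | base => intro _; obtain ⟨h0, h1⟩ := ha1; constructor <;> linarith
  | succ t ht ih =>
    intro htT
    obtain ⟨h0, h1⟩ := ih (by omega)
    obtain ⟨hβ0, hβ1⟩ := hβ t ht (by omega)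
    rw [ha t ht]
    split_ifs with h <;> constructor <;> nlinarith

theorem aci_dynamic_regret_le {α γ D : ℝ} {β a u : ℕ → ℝ} {r s : ℕ} (hα0 : 0 ≤ α)
    (hα1 : α ≤ 1) (hγ : 0 < γ) (hD : 1 ≤ D) (hrs : r ≤ s)
    (ha : ∀ t ∈ Icc r s, a (t + 1) = a t + γ * (α - if β t < a t then 1 else 0))
    (haD : ∀ t ∈ Icc r s, a t ∈ Set.Icc (1 - D) D) (hu : ∀ t ∈ Icc r s, u t ∈ Set.Icc 0 1) :
    ∑ t ∈ Icc r s, pinball α (β t) (a t) - ∑ t ∈ Icc r s, pinball α (β t) (u t)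
      ≤ D ^ 2 * ((∑ t ∈ Icc (r + 1) s, |u t - u (t - 1)| + 1) / γ
        + γ * ((s : ℝ) - r + 1) / 2) := by
  have htel := sum_sq_sub_sq_le hrs (fun t ht => abs_sub_le_of_mem_Icc (haD t ht) (hu t ht))
    fun t ht => by
      simp only [mem_Icc] at ht
      exact abs_sub_le_of_mem_Icc (haD t (by simp; omega)) (hu (t - 1) (by simp; omega))
  have hstep : ∀ t ∈ Icc r s, pinball α (β t) (a t) - pinball α (β t) (u t)
      ≤ ((a t - u t) ^ 2 - (a (t + 1) - u t) ^ 2) / (2 * γ) + γ / 2 := fun t ht =>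
    ha t ht ▸ aci_step_regret_le hα0 hα1 hγ
  set V := ∑ t ∈ Icc (r + 1) s, |u t - u (t - 1)|
  have hV : 0 ≤ V := sum_nonneg fun _ _ => abs_nonneg _
  have hD2 : 1 ≤ D ^ 2 := one_le_pow₀ hD
  calc ∑ t ∈ Icc r s, pinball α (β t) (a t) - ∑ t ∈ Icc r s, pinball α (β t) (u t)
      ≤ ∑ t ∈ Icc r s, (((a t - u t) ^ 2 - (a (t + 1) - u t) ^ 2) / (2 * γ) + γ / 2) := by
        rw [← sum_sub_distrib]; exact sum_le_sum hstep
    _ = (∑ t ∈ Icc r s, ((a t - u t) ^ 2 - (a (t + 1) - u t) ^ 2)) / (2 * γ)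
        + γ * ((s : ℝ) - r + 1) / 2 := by
        rw [sum_add_distrib, ← sum_div, sum_const, nsmul_eq_mul, cast_card_Icc (by omega)]; ring
    _ ≤ (2 * (D ^ 2 * (V + 1))) / (2 * γ) + D ^ 2 * (γ * ((s : ℝ) - r + 1) / 2) := by
        have hr : (r : ℝ) ≤ s := by exact_mod_cast hrs
        have hN : 0 ≤ γ * ((s : ℝ) - r + 1) / 2 := by
          have := mul_nonneg hγ.le (by linarith : (0 : ℝ) ≤ s - r + 1)
          linarith
        gcongr
        · nlinarith [sq_nonneg (a (s + 1) - u s), mul_nonneg (mul_nonneg (by linarith : 0 ≤ D) hV)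
            (sub_nonneg.2 hD)]
        · exact le_mul_of_one_le_left hN hD2
    _ = D ^ 2 * ((V + 1) / γ + γ * ((s : ℝ) - r + 1) / 2) := by field_simp

lemma Fin.exists_lt_le_succ {β : Type*} [LinearOrder β] {k : ℕ} (hk : 0 < k) (f : Fin k → β)
    {x : β} (h0 : f ⟨0, hk⟩ < x) (hlast : x ≤ f ⟨k - 1, Nat.sub_lt hk Nat.one_pos⟩) :
    ∃ (i : Fin k) (hi : (i : ℕ) + 1 < k), f i < x ∧ x ≤ f ⟨i + 1, hi⟩ := by
  obtain ⟨i, hi, hmax⟩ := (univ.filter fun i => f i < x).exists_max_image (fun i => (i : ℕ))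
    ⟨⟨0, hk⟩, by simpa using h0⟩
  rw [mem_filter] at hi
  have hik : (i : ℕ) + 1 < k := by
    by_contra h
    have : i = ⟨k - 1, Nat.sub_lt hk Nat.one_pos⟩ := Fin.ext (show (i : ℕ) = k - 1 by omega)
    exact (this ▸ hi.2).not_ge hlast
  refine ⟨i, hik, hi.2, not_lt.1 fun h => ?_⟩
  have := hmax _ (mem_filter.2 ⟨mem_univ _, h⟩)
  simp at this

lemma exists_step_size_le {k : ℕ} (hk : 0 < k) {γ : Fin k → ℝ} (hγ : ∀ i, 0 < γ i)
    (hratio : ∀ i : Fin k, ∀ hik : (i : ℕ) + 1 < k, γ ⟨(i : ℕ) + 1, hik⟩ / γ i ≤ 2)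
    {x : ℝ} (hx : 0 ≤ x) (htop : x ≤ γ ⟨k - 1, Nat.sub_lt hk one_pos⟩) :
    ∃ i, x ^ 2 / γ i + γ i / 2 ≤ 5 / 2 * max x (γ ⟨0, hk⟩) := by
  rcases le_or_gt x (γ ⟨0, hk⟩) with h0 | h0
  · refine ⟨⟨0, hk⟩, ?_⟩
    have : x ^ 2 / γ ⟨0, hk⟩ ≤ γ ⟨0, hk⟩ := by
      rw [div_le_iff₀ (hγ _)]; nlinarith
    rw [max_eq_right h0]; linarith
  · obtain ⟨i, hi, hix, hxi⟩ := Fin.exists_lt_le_succ hk γ h0 htop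
    have hhalf : x ≤ 2 * γ i := by
      have := hratio i hi; rw [div_le_iff₀ (hγ i)] at this; linarith
    refine ⟨i, ?_⟩
    have : x ^ 2 / γ i ≤ 2 * x := by
      rw [div_le_iff₀ (hγ i)]; nlinarith
    rw [max_eq_left h0.le]; linarith

theorem exists_aci_regret_le {α : ℝ} (hα0 : 0 ≤ α) (hα1 : α ≤ 1) {k : ℕ} (hk : 0 < k)
    {γ : Fin k → ℝ} (hγpos : ∀ i, 0 < γ i) (hγmono : Monotone γ)
    (hγratio : ∀ i : Fin k, ∀ hik : (i : ℕ) + 1 < k, γ ⟨(i : ℕ) + 1, hik⟩ / γ i ≤ 2)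
    (hγtop : 1 ≤ γ ⟨k - 1, Nat.sub_lt hk one_pos⟩)
    {r s T : ℕ} (hr : 1 ≤ r) (hrs : r ≤ s) (hs : s ≤ T)
    {β : ℕ → ℝ} (hβ : ∀ t, 1 ≤ t → t ≤ T → β t ∈ Set.Icc 0 1)
    {a : ℕ → Fin k → ℝ} (ha1 : ∀ i, a 1 i ∈ Set.Icc 0 1)
    (ha : ∀ t, 1 ≤ t → ∀ i, a (t + 1) i = a t i + γ i * (α - if β t < a t i then 1 else 0))
    {u : ℕ → ℝ} (hu : ∀ t, r ≤ t → t ≤ s → u t ∈ Set.Icc 0 1) :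
    ∃ i, ∑ t ∈ Icc r s, pinball α (β t) (a t i) - ∑ t ∈ Icc r s, pinball α (β t) (u t)
      ≤ ((s : ℝ) - r + 1) * (2 * √3 * (1 + γ ⟨k - 1, Nat.sub_lt hk one_pos⟩) ^ 2
        * max (√((∑ t ∈ Icc (r + 1) s, |u t - u (t - 1)| + 1) / ((s : ℝ) - r + 1)))
          (γ ⟨0, hk⟩)) := by
  set N : ℝ := (s : ℝ) - r + 1
  set V := ∑ t ∈ Icc (r + 1) s, |u t - u (t - 1)|
  set γmax := γ ⟨k - 1, Nat.sub_lt hk one_pos⟩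
  have hN : 1 ≤ N := by
    have : (r : ℝ) ≤ s := by exact_mod_cast hrs
    linarith
  have hV0 : 0 ≤ V := sum_nonneg fun _ _ => abs_nonneg _
  have hVN : V ≤ N - 1 := by
    calc V ≤ ∑ t ∈ Icc (r + 1) s, (1 : ℝ) := sum_le_sum fun t ht => by
          simp only [mem_Icc] at ht
          exact abs_sub_le_of_mem_Icc (by simpa using hu t (by omega) ht.2)
            (hu (t - 1) (by omega) (by omega))
      _ = N - 1 := by rw [sum_const, nsmul_one, cast_card_Icc (by omega)]; push_cast; ring
  have hc0 : 0 ≤ (V + 1) / N := by positivity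
  have hc1 : √((V + 1) / N) ≤ γmax :=
    (sqrt_le_one.2 ((div_le_one (by linarith)).2 (by linarith))).trans hγtop
  obtain ⟨i, hi⟩ := exists_step_size_le hk hγpos hγratio (sqrt_nonneg _) hc1
  rw [sq_sqrt hc0] at hi
  refine ⟨i, ?_⟩
  have hγi : γ i ≤ γmax := hγmono (Fin.le_def.2 (show (i : ℕ) ≤ k - 1 by omega))
  have hmem : ∀ t ∈ Icc r s, a t i ∈ Set.Icc (1 - (1 + γmax)) (1 + γmax) := fun t ht => by
    simp only [mem_Icc] at ht
    have hmem := aci_mem_Icc (a := fun t => a t i) hα0 hα1 (hγpos i).le hβ (ha1 i)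
      (fun t ht => ha t ht i) t (by omega) (by omega)
    exact Set.Icc_subset_Icc (by linarith) (by linarith) hmem
  have haci := aci_dynamic_regret_le (a := fun t => a t i) hα0 hα1 (hγpos i)
    (by linarith [hγpos i] : 1 ≤ 1 + γmax) hrs
    (fun t ht => ha t (by simp only [mem_Icc] at ht; omega) i) hmem
    (fun t ht => hu t (mem_Icc.1 ht).1 (mem_Icc.1 ht).2)
  have h52 : 5 / 2 ≤ 2 * √3 := by nlinarith [sq_sqrt (show (0 : ℝ) ≤ 3 by norm_num), sqrt_nonneg 3]
  have hm : 0 ≤ max (√((V + 1) / N)) (γ ⟨0, hk⟩) := le_max_of_le_left (sqrt_nonneg _)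
  calc _ ≤ (1 + γmax) ^ 2 * ((V + 1) / γ i + γ i * N / 2) := haci
    _ = N * ((1 + γmax) ^ 2 * ((V + 1) / N / γ i + γ i / 2)) := by field_simp
    _ ≤ N * ((1 + γmax) ^ 2 * (5 / 2 * max (√((V + 1) / N)) (γ ⟨0, hk⟩))) := by gcongr
    _ ≤ N * ((1 + γmax) ^ 2 * (2 * √3 * max (√((V + 1) / N)) (γ ⟨0, hk⟩))) := by gcongr
    _ = _ := by ring

lemma sum_mul_exp_neg_le {ι : Type*} [Fintype ι] {p ℓ : ι → ℝ} {η : ℝ} (hη : 0 ≤ η)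
    (hp : ∀ i, 0 ≤ p i) (hp1 : ∑ i, p i = 1) (hℓ : ∀ i, 0 ≤ ℓ i) :
    ∑ i, p i * exp (-η * ℓ i) ≤ exp (-η * ∑ i, p i * ℓ i + η ^ 2 * ∑ i, p i * ℓ i ^ 2) := by
  calc ∑ i, p i * exp (-η * ℓ i) ≤ ∑ i, p i * (1 - η * ℓ i + (η * ℓ i) ^ 2) :=
        sum_le_sum fun i _ => mul_le_mul_of_nonneg_left
          (by rw [neg_mul]; exact exp_neg_le_one_sub_add_sq (mul_nonneg hη (hℓ i))) (hp i)
    _ = ∑ i, p i + (-η * ∑ i, p i * ℓ i + η ^ 2 * ∑ i, p i * ℓ i ^ 2) := by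
        rw [mul_sum, mul_sum, ← sum_add_distrib, ← sum_add_distrib]
        exact sum_congr rfl fun i _ => by ring
    _ ≤ _ := by rw [hp1, add_comm]; exact add_one_le_exp _

def IsFixedShare {ι : Type*} [Fintype ι] (η σ : ℝ) (ℓ w : ℕ → ι → ℝ) : Prop :=
  ∀ t, 1 ≤ t → ∀ i, w (t + 1) i = (1 - σ) * w t i * exp (-η * ℓ t i)
    + σ / Fintype.card ι * ∑ j, w t j * exp (-η * ℓ t j)

namespace IsFixedShare

variable {ι : Type*} [Fintype ι] {η σ : ℝ} {ℓ w : ℕ → ι → ℝ}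

lemma sum_succ [Nonempty ι] (hw : IsFixedShare η σ ℓ w) {t : ℕ} (ht : 1 ≤ t) :
    ∑ i, w (t + 1) i = ∑ i, w t i * exp (-η * ℓ t i) := by
  have hk : (Fintype.card ι : ℝ) ≠ 0 := by positivity
  simp only [hw t ht, sum_add_distrib, sum_const, card_univ, nsmul_eq_mul, mul_assoc, ← mul_sum]
  field_simp
  ring

lemma pos (hw : IsFixedShare η σ ℓ w) (hσ0 : 0 ≤ σ) (hσ1 : σ < 1) (hw1 : ∀ i, 0 < w 1 i) :
    ∀ t, 1 ≤ t → ∀ i, 0 < w t i := by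
  intro t ht
  induction t, ht using Nat.le_induction with
  | base => exact hw1
  | succ t ht ih =>
    intro i
    rw [hw t ht i]
    exact add_pos_of_pos_of_nonneg (mul_pos (mul_pos (sub_pos.2 hσ1) (ih i)) (exp_pos _))
      (mul_nonneg (div_nonneg hσ0 (Nat.cast_nonneg _))
        (sum_nonneg fun j _ => (mul_pos (ih j) (exp_pos _)).le))

lemma share_le [Nonempty ι] (hw : IsFixedShare η σ ℓ w) (hσ0 : 0 ≤ σ) (hσ1 : σ < 1)
    (hw1 : ∀ i, w 1 i = 1) {t : ℕ} (ht : 1 ≤ t) (i : ι) :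
    σ / Fintype.card ι * ∑ j, w t j ≤ w t i := by
  obtain _ | _ | t := t
  · omega
  · simp only [zero_add, hw1, sum_const, card_univ, nsmul_eq_mul, mul_one]
    rw [div_mul_cancel₀ _ (by positivity)]
    exact hσ1.le
  · have hpos := hw.pos hσ0 hσ1 (by simp [hw1]) (t + 1) (by omega) i
    rw [hw (t + 1) (by omega) i, hw.sum_succ (by omega)]
    have : 0 ≤ (1 - σ) * w (t + 1) i * exp (-η * ℓ (t + 1) i) :=
      mul_nonneg (mul_nonneg (by linarith) hpos.le) (exp_pos _).le
    linarith

lemma discounted_share_le [Nonempty ι] (hw : IsFixedShare η σ ℓ w) (hσ0 : 0 ≤ σ) (hσ1 : σ < 1)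
    (hw1 : ∀ i, w 1 i = 1) {r : ℕ} (hr : 1 ≤ r) (i : ι) :
    ∀ t, r ≤ t → σ / Fintype.card ι * (∑ j, w r j) * (1 - σ) ^ (t - r)
      * exp (-η * ∑ u ∈ Ico r t, ℓ u i) ≤ w t i := by
  intro t ht
  induction t, ht using Nat.le_induction with
  | base => simpa using hw.share_le hσ0 hσ1 hw1 hr i
  | succ t ht ih =>
    have hpos := hw.pos hσ0 hσ1 (by simp [hw1])
    have hshare : 0 ≤ σ / Fintype.card ι * ∑ j, w t j * exp (-η * ℓ t j) :=
      mul_nonneg (div_nonneg hσ0 (Nat.cast_nonneg _))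
        (sum_nonneg fun j _ => (mul_pos (hpos t (by omega) j) (exp_pos _)).le)
    rw [hw t (by omega) i, sum_Ico_succ_top ht, Nat.sub_add_comm ht, pow_succ, mul_add,
      exp_add]
    calc _ = (1 - σ) * (σ / Fintype.card ι * (∑ j, w r j) * (1 - σ) ^ (t - r)
          * exp (-η * ∑ u ∈ Ico r t, ℓ u i)) * exp (-η * ℓ t i) := by ring
      _ ≤ (1 - σ) * w t i * exp (-η * ℓ t i) := by gcongr
      _ ≤ _ := le_add_of_nonneg_right hshare

lemma sum_le [Nonempty ι] (hw : IsFixedShare η σ ℓ w) (hσ0 : 0 ≤ σ) (hσ1 : σ < 1)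
    (hw1 : ∀ i, w 1 i = 1) (hη : 0 ≤ η) (hℓ : ∀ t i, 0 ≤ ℓ t i) {p : ℕ → ι → ℝ}
    (hp : ∀ t i, p t i = w t i / ∑ j, w t j) {r : ℕ} (hr : 1 ≤ r) :
    ∀ t, r ≤ t → ∑ i, w t i ≤ (∑ i, w r i)
      * exp (∑ u ∈ Ico r t, (-η * ∑ i, p u i * ℓ u i + η ^ 2 * ∑ i, p u i * ℓ u i ^ 2)) := by
  intro t ht
  induction t, ht using Nat.le_induction with
  | base => simp
  | succ t ht ih =>
    have hpos := hw.pos hσ0 hσ1 (by simp [hw1]) t (by omega)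
    have hW : 0 < ∑ j, w t j := sum_pos (fun j _ => hpos j) univ_nonempty
    have hp1 : ∑ i, p t i = 1 := by simp only [hp, ← sum_div, div_self hW.ne']
    have hp0 : ∀ i, 0 ≤ p t i := fun i => by rw [hp]; exact div_nonneg (hpos i).le hW.le
    calc ∑ i, w (t + 1) i = (∑ j, w t j) * ∑ i, p t i * exp (-η * ℓ t i) := by
          rw [hw.sum_succ (by omega), mul_sum]
          exact sum_congr rfl fun i _ => by rw [hp]; field_simp
      _ ≤ (∑ j, w t j) * exp (-η * ∑ i, p t i * ℓ t i + η ^ 2 * ∑ i, p t i * ℓ t i ^ 2) := by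
          gcongr; exact sum_mul_exp_neg_le hη hp0 hp1 (hℓ t)
      _ ≤ (∑ i, w r i) * exp (∑ u ∈ Ico r t,
            (-η * ∑ i, p u i * ℓ u i + η ^ 2 * ∑ i, p u i * ℓ u i ^ 2))
          * exp (-η * ∑ i, p t i * ℓ t i + η ^ 2 * ∑ i, p t i * ℓ t i ^ 2) := by gcongr
      _ = _ := by rw [mul_assoc, ← exp_add, ← sum_Ico_succ_top ht]

theorem regret_le [Nonempty ι] (hw : IsFixedShare η σ ℓ w) (hη : 0 < η) (hσ0 : 0 < σ)
    (hσ : σ ≤ 1 / 2) (hℓ : ∀ t i, 0 ≤ ℓ t i) (hw1 : ∀ i, w 1 i = 1) {p : ℕ → ι → ℝ}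
    (hp : ∀ t i, p t i = w t i / ∑ j, w t j) {r s : ℕ} (hr : 1 ≤ r) (hrs : r ≤ s) (i : ι) :
    ∑ t ∈ Icc r s, ∑ j, p t j * ℓ t j - ∑ t ∈ Icc r s, ℓ t i
      ≤ (log (Fintype.card ι / σ) + 2 * σ * ((s : ℝ) - r + 1)) / η
        + η * ∑ t ∈ Icc r s, ∑ j, p t j * ℓ t j ^ 2 := by
  have hσ1 : σ < 1 := by linarith
  have hpos := hw.pos hσ0.le hσ1 (by simp [hw1])
  have hlow := hw.discounted_share_le hσ0.le hσ1 hw1 hr i (s + 1) (by omega)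
  have hup := hw.sum_le hσ0.le hσ1 hw1 hη.le hℓ hp hr (s + 1) (by omega)
  have hwi : w (s + 1) i ≤ ∑ j, w (s + 1) j :=
    single_le_sum (fun j _ => (hpos (s + 1) (by omega) j).le) (mem_univ i)
  have hWr : 0 < ∑ j, w r j := sum_pos (fun j _ => hpos r hr j) univ_nonempty
  rw [Ico_add_one_right_eq_Icc] at hlow hup
  rw [sum_add_distrib, ← mul_sum, ← mul_sum] at hup
  set E := ∑ t ∈ Icc r s, ∑ j, p t j * ℓ t j
  set L := ∑ t ∈ Icc r s, ℓ t i
  set Q := ∑ t ∈ Icc r s, ∑ j, p t j * ℓ t j ^ 2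
  have key : σ / Fintype.card ι * (1 - σ) ^ (s + 1 - r) * exp (-η * L)
      ≤ exp (-η * E + η ^ 2 * Q) := by
    refine le_of_mul_le_mul_left ?_ hWr
    calc _ = σ / Fintype.card ι * (∑ j, w r j) * (1 - σ) ^ (s + 1 - r) * exp (-η * L) := by ring
      _ ≤ _ := hlow.trans (hwi.trans hup)
  have hlog := log_le_log (by positivity) key
  rw [log_mul (by positivity) (exp_pos _).ne', log_mul (by positivity) (by positivity), log_pow,
    log_exp, log_exp, log_div hσ0.ne' (by positivity)] at hlog
  have hn := cast_card_Icc (r := r) (s := s) (by omega)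
  rw [Nat.card_Icc] at hn
  have h2σ := mul_le_mul_of_nonneg_left (neg_log_one_sub_le_two_mul hσ0.le hσ)
    (by positivity : (0 : ℝ) ≤ (s + 1 - r : ℕ))
  rw [hn] at hlog h2σ
  rw [log_div (by positivity) hσ0.ne', div_add' _ _ _ hη.ne', le_div_iff₀ hη]
  nlinarith

end IsFixedShare

theorem faci_dynamic_regret_general
    (α : ℝ) (hα : α ∈ Set.Ioo (0 : ℝ) 1)
    (k T : ℕ) (hk : 0 < k)
    (r s : ℕ) (hr : 1 ≤ r) (hrs : r ≤ s) (hs : s ≤ T)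
    (η σ : ℝ) (hη : 0 < η) (hσ0 : 0 < σ) (hσ : σ ≤ 1 / 2)
    (γ : Fin k → ℝ) (hγpos : ∀ i, 0 < γ i) (hγmono : StrictMono γ)
    (hγratio : ∀ i : Fin k, ∀ hik : (i : ℕ) + 1 < k, γ ⟨(i : ℕ) + 1, hik⟩ / γ i ≤ 2)
    (hγtop : Real.sqrt (1 + 1 / ((s : ℝ) - (r : ℝ) + 1))
      ≤ γ ⟨k - 1, Nat.sub_lt hk one_pos⟩)
    (β : ℕ → ℝ) (hβ : ∀ t, 1 ≤ t → t ≤ T → β t ∈ Set.Icc (0 : ℝ) 1)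
    (a : ℕ → Fin k → ℝ) (ha1 : ∀ i, a 1 i ∈ Set.Icc (0 : ℝ) 1)
    (harec : ∀ t, 1 ≤ t → ∀ i,
      a (t + 1) i = a t i + γ i * (α - if β t < a t i then 1 else 0))
    (w : ℕ → Fin k → ℝ) (hw1 : ∀ i, w 1 i = 1)
    (hwrec : ∀ t, 1 ≤ t → ∀ i,
      w (t + 1) i = (1 - σ) * w t i * Real.exp (-η * pinball α (β t) (a t i))
        + σ / k * ∑ j, w t j * Real.exp (-η * pinball α (β t) (a t j)))
    (p : ℕ → Fin k → ℝ) (hp : ∀ t i, p t i = w t i / ∑ j, w t j)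
    (astar : ℕ → ℝ) (hastar : ∀ t, r ≤ t → t ≤ s → astar t ∈ Set.Icc (0 : ℝ) 1) :
    (1 / ((s : ℝ) - (r : ℝ) + 1))
        * ∑ t ∈ Finset.Icc r s, ∑ i, p t i * pinball α (β t) (a t i)
      - (1 / ((s : ℝ) - (r : ℝ) + 1))
        * ∑ t ∈ Finset.Icc r s, pinball α (β t) (astar t)
    ≤ (Real.log ((k : ℝ) / σ) + 2 * σ * ((s : ℝ) - (r : ℝ) + 1))
        / (η * ((s : ℝ) - (r : ℝ) + 1))
      + (η / ((s : ℝ) - (r : ℝ) + 1))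
        * ∑ t ∈ Finset.Icc r s, ∑ i, p t i * (pinball α (β t) (a t i)) ^ 2
      + 2 * Real.sqrt 3 * (1 + γ ⟨k - 1, Nat.sub_lt hk one_pos⟩) ^ 2
        * max
            (Real.sqrt (((∑ t ∈ Finset.Icc (r + 1) s, |astar t - astar (t - 1)|) + 1)
              / ((s : ℝ) - (r : ℝ) + 1)))
            (γ ⟨0, hk⟩) := by
  obtain ⟨hα0, hα1⟩ := hα
  have hN : 0 < (s : ℝ) - r + 1 := by
    have : (r : ℝ) ≤ s := by exact_mod_cast hrs
    linarith
  have hγtop' : 1 ≤ γ ⟨k - 1, Nat.sub_lt hk one_pos⟩ :=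
    (one_le_sqrt.2 (le_add_of_nonneg_right (by positivity))).trans hγtop
  obtain ⟨i, hi⟩ := exists_aci_regret_le hα0.le hα1.le hk hγpos hγmono.monotone hγratio hγtop'
    hr hrs hs hβ ha1 harec hastar
  have : Nonempty (Fin k) := ⟨⟨0, hk⟩⟩
  have hw : IsFixedShare η σ (fun t i => pinball α (β t) (a t i)) w := fun t ht i => by
    simpa only [Fintype.card_fin] using hwrec t ht i
  have hfs := hw.regret_le hη hσ0 hσ (fun t j => pinball_nonneg hα0.le hα1.le _ _) hw1 hp hr hrs i
  rw [Fintype.card_fin] at hfs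
  have hsum := div_le_div_of_nonneg_right (add_le_add hfs hi) hN.le
  refine Eq.trans_le ?_ (hsum.trans_eq ?_)
  · ring
  · rw [add_div _ _ ((s : ℝ) - r + 1), mul_div_cancel_left₀ _ hN.ne']
    congr 1
    field_simp

/-- Dynamic regret bound for FACI (Theorem 3 of the paper): `k` copies of adaptive
conformal inference with step sizes `γ 0 < ⋯ < γ (k−1)` (consecutive ratios at most 2,
largest at least `√(1+1/|I|)`), aggregated by fixed-share exponential reweighting with
parameters `η, σ`.  Here expectations over the algorithm's internal randomness are
written as probability-weighted sums, `γ_max = γ (k−1)` and `|I| = s − r + 1`. -/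
theorem faci_dynamic_regret
    (α : ℝ) (hα : α ∈ Set.Ioo (0 : ℝ) 1)
    (k T : ℕ) (hk : 0 < k) (hT : 1 ≤ T)
    (r s : ℕ) (hr : 1 ≤ r) (hrs : r ≤ s) (hs : s ≤ T)
    (η σ : ℝ) (hη : 0 < η) (hσ0 : 0 < σ) (hσ : σ ≤ 1 / 2)
    (γ : Fin k → ℝ) (hγpos : ∀ i, 0 < γ i) (hγmono : StrictMono γ)
    (hγratio : ∀ i : Fin k, ∀ hik : (i : ℕ) + 1 < k, γ ⟨(i : ℕ) + 1, hik⟩ / γ i ≤ 2)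
    (hγtop : Real.sqrt (1 + 1 / ((s : ℝ) - (r : ℝ) + 1))
      ≤ γ ⟨k - 1, Nat.sub_lt hk one_pos⟩)
    (β : ℕ → ℝ) (hβ : ∀ t, 1 ≤ t → t ≤ T → β t ∈ Set.Icc (0 : ℝ) 1)
    (a : ℕ → Fin k → ℝ) (ha1 : ∀ i, a 1 i ∈ Set.Icc (0 : ℝ) 1)
    (harec : ∀ t, 1 ≤ t → ∀ i,
      a (t + 1) i = a t i + γ i * (α - if β t < a t i then 1 else 0))
    (w : ℕ → Fin k → ℝ) (hw1 : ∀ i, w 1 i = 1)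
    (hwrec : ∀ t, 1 ≤ t → ∀ i,
      w (t + 1) i = (1 - σ) * w t i * Real.exp (-η * pinball α (β t) (a t i))
        + σ / k * ∑ j, w t j * Real.exp (-η * pinball α (β t) (a t j)))
    (p : ℕ → Fin k → ℝ) (hp : ∀ t i, p t i = w t i / ∑ j, w t j)
    (astar : ℕ → ℝ) (hastar : ∀ t, r ≤ t → t ≤ s → astar t ∈ Set.Icc (0 : ℝ) 1) :
    (1 / ((s : ℝ) - (r : ℝ) + 1))
        * ∑ t ∈ Finset.Icc r s, ∑ i, p t i * pinball α (β t) (a t i)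
      - (1 / ((s : ℝ) - (r : ℝ) + 1))
        * ∑ t ∈ Finset.Icc r s, pinball α (β t) (astar t)
    ≤ (Real.log ((k : ℝ) / σ) + 2 * σ * ((s : ℝ) - (r : ℝ) + 1))
        / (η * ((s : ℝ) - (r : ℝ) + 1))
      + (η / ((s : ℝ) - (r : ℝ) + 1))
        * ∑ t ∈ Finset.Icc r s, ∑ i, p t i * (pinball α (β t) (a t i)) ^ 2
      + 2 * Real.sqrt 3 * (1 + γ ⟨k - 1, Nat.sub_lt hk one_pos⟩) ^ 2
        * max
            (Real.sqrt (((∑ t ∈ Finset.Icc (r + 1) s, |astar t - astar (t - 1)|) + 1)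
              / ((s : ℝ) - (r : ℝ) + 1)))
            (γ ⟨0, hk⟩) :=
  faci_dynamic_regret_general α hα k T hk r s hr hrs hs η σ hη hσ0 hσ γ hγpos hγmono hγratio hγtop β
    hβ a ha1 harec w hw1 hwrec p hp astar hastar
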